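/- Let m ≥ 3 be an integer and 0 < p < 1/(m−1). Define the m-ary additive channel Q on ZMod m by Q(y|x1,x2) = 1 − (m−1)p if y = x1 + x2 (mod m) and Q(y|x1,x2) = p otherwise, and set D_1(x1,x2‖z1,z2) = D_Q(x1,x2‖z1,x2), D_2(x1,x2‖z1,z2) = D_Q(x1,x2‖x1,z2), D_3(x1,x2‖z1,z2) = D_Q(x1,x2‖z1,z2). Then the supremum, over all probability mass functions P on (ZMod m)⁴, of min_{i ∈ {1,2,3}} Σ_{(x1,x2,z1,z2)} P(x1,x2,z1,z2) · D_i(x1,x2‖z1,z2) is attained and equals (1 − mp) · log₂( (1 − (m−1)p) / p ), which also equals max_{i ∈ {1,2,3}} max_{(x1,x2,z1,z2)} D_i(x1,x2‖z1,z2); in particular it is attained by the point mass at (x1,x2,z1,z2) = (0, 0, 1, 1). -/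

import Mathlib

/-- The `m`-ary additive MAC: `Q(y | x1, x2) = 1 - (m-1)p` if `y = x1 + x2 (mod m)`,
and `p` otherwise. -/
noncomputable def Qmary (m : ℕ) (p : ℝ) (x1 x2 y : ZMod m) : ℝ :=
  if y = x1 + x2 then 1 - ((m : ℝ) - 1) * p else p

/-- The divergence `D_Q(x1,x2 ‖ z1,z2) = Σ_y Q(y|x1,x2) log₂(Q(y|x1,x2)/Q(y|z1,z2))`
for the `m`-ary additive MAC. -/
noncomputable def DQmary (m : ℕ) [NeZero m] (p : ℝ) (x1 x2 z1 z2 : ZMod m) : ℝ :=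
  ∑ y : ZMod m, Qmary m p x1 x2 y * Real.logb 2 (Qmary m p x1 x2 y / Qmary m p z1 z2 y)

/-- `E_P[D_1]`: the expectation of `D_1(x1,x2‖z1,z2) = D_Q(x1,x2‖z1,x2)` under a pmf `P`
on input quadruples. -/
noncomputable def expD1 (m : ℕ) [NeZero m] (p : ℝ)
    (P : ZMod m × ZMod m × ZMod m × ZMod m → ℝ) : ℝ :=
  ∑ t : ZMod m × ZMod m × ZMod m × ZMod m, P t * DQmary m p t.1 t.2.1 t.2.2.1 t.2.1

/-- `E_P[D_2]`: the expectation of `D_2(x1,x2‖z1,z2) = D_Q(x1,x2‖x1,z2)` under a pmf `P`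
on input quadruples. -/
noncomputable def expD2 (m : ℕ) [NeZero m] (p : ℝ)
    (P : ZMod m × ZMod m × ZMod m × ZMod m → ℝ) : ℝ :=
  ∑ t : ZMod m × ZMod m × ZMod m × ZMod m, P t * DQmary m p t.1 t.2.1 t.1 t.2.2.2

/-- `E_P[D_3]`: the expectation of `D_3(x1,x2‖z1,z2) = D_Q(x1,x2‖z1,z2)` under a pmf `P`
on input quadruples. -/
noncomputable def expD3 (m : ℕ) [NeZero m] (p : ℝ)
    (P : ZMod m × ZMod m × ZMod m × ZMod m → ℝ) : ℝ :=
  ∑ t : ZMod m × ZMod m × ZMod m × ZMod m, P t * DQmary m p t.1 t.2.1 t.2.2.1 t.2.2.2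

/-! The channel output depends on the inputs only through `s = x1 + x2`, and `Q(·|s)` and
`Q(·|s')` differ only at the outputs `s` and `s'`. Hence `D_Q(x1,x2‖z1,z2)` vanishes when the
sums agree and otherwise equals `q log₂(q/p) + p log₂(p/q) = (q - p) log₂(q/p)` with
`q = 1 - (m-1)p`, which is nonnegative. So this constant bounds every `D_i`, hence every
expectation, and the point mass at `(0,0,1,1)` attains it for all three `D_i` at once because
`0`, `1` and `2` are distinct in `ZMod m` for `m ≥ 3`. -/

open Real

lemma sub_mul_logb_div_nonneg {a b : ℝ} (ha : 0 < a) (hb : 0 < b) :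
    0 ≤ (a - b) * logb 2 (a / b) := by
  rw [logb_div ha.ne' hb.ne']
  rcases le_total a b with hab | hab
  · exact mul_nonneg_of_nonpos_of_nonpos (sub_nonpos.2 hab)
      (sub_nonpos.2 (logb_le_logb_of_le one_lt_two ha hab))
  · exact mul_nonneg (sub_nonneg.2 hab) (sub_nonneg.2 (logb_le_logb_of_le one_lt_two hb hab))

lemma Fintype.sum_mul_le_of_le {ι : Type*} [Fintype ι] {P f : ι → ℝ} {c : ℝ}
    (hP0 : ∀ t, 0 ≤ P t) (hP1 : ∑ t, P t = 1) (hf : ∀ t, f t ≤ c) :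
    ∑ t, P t * f t ≤ c :=
  calc ∑ t, P t * f t ≤ ∑ t, P t * c :=
        Finset.sum_le_sum fun t _ => mul_le_mul_of_nonneg_left (hf t) (hP0 t)
    _ = c := by rw [← Finset.sum_mul, hP1, one_mul]

lemma ZMod.two_ne_zero_of_three_le {m : ℕ} (hm : 3 ≤ m) : (2 : ZMod m) ≠ 0 := by
  have : Fact (1 < m) := ⟨by omega⟩
  intro h
  have := congrArg ZMod.val h
  rw [ZMod.val_zero, ZMod.val_ofNat, Nat.mod_eq_of_lt hm] at this
  omega

section Qmary

variable {m : ℕ} {p : ℝ}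

lemma Qmary_ne_zero (hp : p ≠ 0) (hq : 1 - ((m : ℝ) - 1) * p ≠ 0) (x1 x2 y : ZMod m) :
    Qmary m p x1 x2 y ≠ 0 := by
  unfold Qmary; split_ifs <;> assumption

variable [NeZero m]

lemma DQmary_of_add_eq {x1 x2 z1 z2 : ZMod m} (hp : p ≠ 0) (hq : 1 - ((m : ℝ) - 1) * p ≠ 0)
    (h : x1 + x2 = z1 + z2) : DQmary m p x1 x2 z1 z2 = 0 := by
  refine Finset.sum_eq_zero fun y _ => ?_
  have hQ : Qmary m p x1 x2 y = Qmary m p z1 z2 y := by simp only [Qmary, h]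
  rw [hQ, div_self (Qmary_ne_zero hp hq _ _ _), logb_one, mul_zero]

lemma DQmary_of_add_ne {x1 x2 z1 z2 : ZMod m} (hp : p ≠ 0) (hq : 1 - ((m : ℝ) - 1) * p ≠ 0)
    (h : x1 + x2 ≠ z1 + z2) :
    DQmary m p x1 x2 z1 z2 = (1 - m * p) * logb 2 ((1 - ((m : ℝ) - 1) * p) / p) := by
  rw [DQmary, Fintype.sum_eq_add (x1 + x2) (z1 + z2) h]
  · simp only [Qmary, if_true, if_neg h, if_neg (Ne.symm h)]
    rw [logb_div hp hq, logb_div hq hp]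
    ring
  · rintro y ⟨hx, hz⟩
    simp only [Qmary, if_neg hx, if_neg hz, div_self hp, logb_one, mul_zero]

lemma DQmary_le (hp : 0 < p) (hq : 0 < 1 - ((m : ℝ) - 1) * p) (x1 x2 z1 z2 : ZMod m) :
    DQmary m p x1 x2 z1 z2 ≤ (1 - m * p) * logb 2 ((1 - ((m : ℝ) - 1) * p) / p) := by
  by_cases h : x1 + x2 = z1 + z2
  · rw [DQmary_of_add_eq hp.ne' hq.ne' h]
    convert sub_mul_logb_div_nonneg hq hp using 2
    ring
  · exact (DQmary_of_add_ne hp.ne' hq.ne' h).le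

end Qmary

/-- For the `m`-ary additive MAC with `m ≥ 3` and `0 < p < 1/(m-1)`:
`D_l = sup_P min_i E_P[D_i]` is attained and equals
`(1 - mp) log₂((1-(m-1)p)/p)`, which is also the unrestricted maximum
`D_u = max_i max D_i`; moreover the point mass at `(0,0,1,1)` attains the supremum. -/
theorem mary_additive_Dl_eq_Du (m : ℕ) [NeZero m] (hm : 3 ≤ m)
    (p : ℝ) (hp0 : 0 < p) (hp1 : p < 1 / ((m : ℝ) - 1)) :
    IsGreatest
        {x : ℝ | ∃ P : ZMod m × ZMod m × ZMod m × ZMod m → ℝ,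
          (∀ t, 0 ≤ P t) ∧ (∑ t, P t = 1) ∧
          x = min (expD1 m p P) (min (expD2 m p P) (expD3 m p P))}
        ((1 - (m : ℝ) * p) * Real.logb 2 ((1 - ((m : ℝ) - 1) * p) / p)) ∧
      IsGreatest
        ((Set.range fun t : ZMod m × ZMod m × ZMod m × ZMod m =>
            DQmary m p t.1 t.2.1 t.2.2.1 t.2.1) ∪
          (Set.range fun t : ZMod m × ZMod m × ZMod m × ZMod m =>
            DQmary m p t.1 t.2.1 t.1 t.2.2.2) ∪
          (Set.range fun t : ZMod m × ZMod m × ZMod m × ZMod m =>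
            DQmary m p t.1 t.2.1 t.2.2.1 t.2.2.2))
        ((1 - (m : ℝ) * p) * Real.logb 2 ((1 - ((m : ℝ) - 1) * p) / p)) ∧
      min (expD1 m p fun t => if t = (0, 0, 1, 1) then 1 else 0)
          (min (expD2 m p fun t => if t = (0, 0, 1, 1) then 1 else 0)
            (expD3 m p fun t => if t = (0, 0, 1, 1) then 1 else 0)) =
        (1 - (m : ℝ) * p) * Real.logb 2 ((1 - ((m : ℝ) - 1) * p) / p) := by
  have : Fact (1 < m) := ⟨by omega⟩
  have hq : 0 < 1 - ((m : ℝ) - 1) * p := by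
    have hm1 : (0 : ℝ) < m - 1 := by
      have : (3 : ℝ) ≤ m := by exact_mod_cast hm
      linarith
    rw [lt_div_iff₀ hm1] at hp1
    linarith
  set c := (1 - (m : ℝ) * p) * logb 2 ((1 - ((m : ℝ) - 1) * p) / p)
  have hD : ∀ {x1 x2 z1 z2 : ZMod m}, x1 + x2 ≠ z1 + z2 → DQmary m p x1 x2 z1 z2 = c :=
    DQmary_of_add_ne hp0.ne' hq.ne'
  have h02 : (0 : ZMod m) + 0 ≠ 1 + 1 := by
    simpa [one_add_one_eq_two] using (ZMod.two_ne_zero_of_three_le hm).symm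
  have hmin : min (expD1 m p fun t => if t = (0, 0, 1, 1) then 1 else 0)
      (min (expD2 m p fun t => if t = (0, 0, 1, 1) then 1 else 0)
        (expD3 m p fun t => if t = (0, 0, 1, 1) then 1 else 0)) = c := by
    simp only [expD1, expD2, expD3, ite_mul, one_mul, zero_mul, Fintype.sum_ite_eq']
    rw [hD (by simp), hD (by simp), hD h02, min_self, min_self]
  refine ⟨⟨⟨_, fun t => by positivity, by simp, hmin.symm⟩, ?_⟩, ⟨?_, ?_⟩, hmin⟩
  · rintro x ⟨P, hP0, hP1, rfl⟩
    exact (min_le_left _ _).trans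
      (Fintype.sum_mul_le_of_le hP0 hP1 fun t => DQmary_le hp0 hq _ _ _ _)
  · exact Or.inr ⟨(0, 0, 1, 1), hD h02⟩
  · rintro x ((⟨t, rfl⟩ | ⟨t, rfl⟩) | ⟨t, rfl⟩) <;> exact DQmary_le hp0 hq _ _ _ _
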